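/- arXiv:2109.13465 — 2 statements merged into one kernel-verified Lean document; each statement's English description precedes it below -/
import Mathlib

section
/- Let d be a non-eclipsed 2-Duke in a multipartite tournament. Then at least one of the following holds: (i) there exists a 1-Duke; (ii) some 2-Duke has an arc to d; (iii) there exist three distinct 2-Dukes; (iv) there exist four distinct 3-Dukes. -/
/-- An orientation of a complete multipartite graph: vertices `V`, partite sets
given as fibers of `part : V → ι`, and `peck` the arc relation. Between any two
vertices in different partite sets there is exactly one arc, and there are no
arcs within a partite set. -/
structure MTour (V : Type*) (ι : Type*) where
  part : V → ι
  peck : V → V → Prop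
  complete : ∀ u v, part u ≠ part v → peck u v ∨ peck v u
  inter : ∀ u v, peck u v → part u ≠ part v
  asymm : ∀ u v, peck u v → ¬ peck v u

namespace MTour

variable {V ι : Type*}

/-- There is a directed path of length at most `m` from `d` to `c`. -/
def hasPath (T : MTour V ι) (m : ℕ) (d c : V) : Prop :=
  ∃ k ≤ m, ∃ f : ℕ → V, f 0 = d ∧ f k = c ∧ ∀ i < k, T.peck (f i) (f (i + 1))

/-- `d` is an `m`-Duke: every vertex in a different partite set is reachable
from `d` by a directed path of length at most `m`. -/
def isDuke (T : MTour V ι) (m : ℕ) (d : V) : Prop :=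
  ∀ c, T.part c ≠ T.part d → T.hasPath m d c

/-- `d` is an `m`-King: every other vertex is reachable from `d` by a directed
path of length at most `m`. -/
def isKing (T : MTour V ι) (m : ℕ) (d : V) : Prop :=
  ∀ c, c ≠ d → T.hasPath m d c

/-- The out-degree of a vertex. -/
noncomputable def outDeg (T : MTour V ι) (v : V) : ℕ :=
  Nat.card {w // T.peck v w}

/-- `e` eclipses `d`: same partite set, `e` pecks everything `d` pecks, and
at least one vertex `d` does not peck. -/
def eclipses (T : MTour V ι) (e d : V) : Prop :=
  T.part e = T.part d ∧ (∀ c, T.peck d c → T.peck e c) ∧ ∃ c, T.peck e c ∧ ¬ T.peck d c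

/-- `d` is non-eclipsed: no vertex of its partite set eclipses it. -/
def nonEclipsed (T : MTour V ι) (d : V) : Prop :=
  ∀ e, ¬ T.eclipses e d

/-- Partite set `i` dominates partite set `j`: some vertex of `i` pecks all of `j`. -/
def Dominates (T : MTour V ι) (i j : ι) : Prop :=
  ∃ v, T.part v = i ∧ ∀ w, T.part w = j → T.peck v w

end MTour

/-!
Suppose there is no 1-Duke and no 2-Duke pecks `d`; we exhibit four 3-Dukes. As `d` is not a
1-Duke it has in-neighbours, and it pecks every other vertex outside its partite set. Every
in-neighbour `b` of `d` is a 3-Duke: it reaches the partite set of `d` either directly or as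
`b → d → w → c`, the vertex `w` being supplied by `d` not being eclipsed by `c`. So three
in-neighbours finish, and otherwise the fourth 3-Duke is found near the one or two
in-neighbours. A vertex `e` of the partite set of `d` that pecks an in-neighbour `b` and reaches
all of them within three steps is a 3-Duke, via `e → b → d → c`. Such `e` are found from the
in-neighbours not being 2-Dukes: each in-neighbour `b` misses some `e`, which lies in the
partite set of `d` and pecks `b`. With two in-neighbours `b₁`, `b₂` that no vertex pecks both
of, they lie in one partite set (else the one pecking the other is a 2-Duke) and the missed
vertices give `e₁ → b₁ → e₂ → b₂`. With a single in-neighbour `b`, non-eclipsedness gives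
`d → x → e`, and either some such `x` pecks `b` or `x` lies in the partite set of `b`; in both
cases `x` is a 3-Duke.
-/

namespace MTour

variable {V ι : Type*} {T : MTour V ι} {a a' b b₁ b₂ c d e u v w x : V} {m n : ℕ}

def ExistsFourDistinct (P : V → Prop) : Prop :=
  ∃ v₁ v₂ v₃ v₄, v₁ ≠ v₂ ∧ v₁ ≠ v₃ ∧ v₁ ≠ v₄ ∧ v₂ ≠ v₃ ∧ v₂ ≠ v₄ ∧ v₃ ≠ v₄ ∧
    P v₁ ∧ P v₂ ∧ P v₃ ∧ P v₄

lemma ne_of_peck (h : T.peck u v) : u ≠ v :=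
  fun huv => T.inter u v h (congrArg T.part huv)

lemma ne_of_peck_of_peck (huv : T.peck u v) (hvw : T.peck v w) : u ≠ w := by
  rintro rfl
  exact T.asymm u v huv hvw

lemma peck_of_not_peck (h : T.part u ≠ T.part v) (hn : ¬ T.peck v u) : T.peck u v :=
  (T.complete u v h).resolve_right hn

lemma hasPath_refl (m : ℕ) (u : V) : T.hasPath m u u :=
  ⟨0, m.zero_le, fun _ => u, rfl, rfl, fun _ hi => absurd hi (Nat.not_lt_zero _)⟩

lemma hasPath_cons (h : T.peck u v) (hp : T.hasPath m v c) : T.hasPath (m + 1) u c := by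
  obtain ⟨k, hk, f, rfl, rfl, hf⟩ := hp
  refine ⟨k + 1, by omega, fun | 0 => u | i + 1 => f i, rfl, rfl, ?_⟩
  rintro (_ | i) hi
  · exact h
  · exact hf i (by omega)

lemma hasPath_of_peck (h : T.peck u v) : T.hasPath (m + 1) u v :=
  hasPath_cons h (hasPath_refl m v)

lemma isDuke.mono (hd : T.isDuke m d) (h : m ≤ n) : T.isDuke n d := fun c hc =>
  let ⟨k, hk, hf⟩ := hd c hc
  ⟨k, hk.trans h, hf⟩

lemma exists_peck_of_not_isDuke_one (h : ¬ T.isDuke 1 d) : ∃ b, T.peck b d := by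
  simp only [isDuke, not_forall] at h
  obtain ⟨c, hc, hfar⟩ := h
  exact ⟨c, peck_of_not_peck hc fun hdc => hfar (hasPath_of_peck hdc)⟩

lemma exists_far_of_not_isDuke_two (hb : T.peck b d) (h : ¬ T.isDuke 2 b) :
    ∃ e, T.peck e b ∧ ¬ T.peck d e ∧ ∀ y, T.peck b y → ¬ T.peck y e := by
  simp only [isDuke, not_forall] at h
  obtain ⟨e, he, hfar⟩ := h
  refine ⟨e, peck_of_not_peck he fun hbe => hfar (hasPath_of_peck hbe), fun hde => ?_,
    fun y hby hye => hfar (hasPath_cons hby (hasPath_of_peck hye))⟩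
  exact hfar (hasPath_cons hb (hasPath_of_peck hde))

lemma nonEclipsed.exists_peck_peck_or_subset (hne : T.nonEclipsed d) (hc : T.part c = T.part d) :
    (∃ w, T.peck d w ∧ T.peck w c) ∨ ∀ w, T.peck c w → T.peck d w := by
  by_contra! h
  obtain ⟨hdc, w, hcw, hdw⟩ := h
  refine hne c ⟨hc, fun w' hdw' => peck_of_not_peck ?_ (hdc w' hdw'), w, hcw, hdw⟩
  rw [hc]
  exact T.inter d w' hdw'

lemma isDuke_three_of_peck (hd : T.isDuke 2 d) (hne : T.nonEclipsed d) (hb : T.peck b d) :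
    T.isDuke 3 b := by
  intro c hc
  by_cases hcd : T.part c = T.part d
  · rcases hne.exists_peck_peck_or_subset hcd with ⟨w, hdw, hwc⟩ | hsub
    · exact hasPath_cons hb (hasPath_cons hdw (hasPath_of_peck hwc))
    · exact hasPath_of_peck (peck_of_not_peck (Ne.symm hc) fun hcb => T.asymm _ _ hb (hsub b hcb))
  · exact hasPath_cons hb (hd c hcd)

lemma hasPath_three_of_peck_of_peck (hub : T.peck u b) (hb : T.peck b d)
    (hin : ∀ c, T.peck c d → T.hasPath 3 u c) (hc : T.part c ≠ T.part d) : T.hasPath 3 u c := by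
  by_cases hcd : T.peck c d
  · exact hin c hcd
  · exact hasPath_cons hub (hasPath_cons hb (hasPath_of_peck (peck_of_not_peck (Ne.symm hc) hcd)))

lemma isDuke_three_of_part_eq (he : T.part e = T.part d) (heb : T.peck e b) (hb : T.peck b d)
    (hin : ∀ c, T.peck c d → T.hasPath 3 e c) : T.isDuke 3 e := fun _ hc =>
  hasPath_three_of_peck_of_peck heb hb hin (he ▸ hc)

lemma isDuke_two_of_inNeighbours_pair (ha : T.peck a d) (ha' : T.peck a' d) (haa' : T.peck a a')
    (hin : ∀ c, T.peck c d → c = a ∨ c = a')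
    (hno : ∀ e, T.part e = T.part d → T.peck e a → ¬ T.peck e a') : T.isDuke 2 a := by
  intro c hc
  by_cases hcd : T.part c = T.part d
  · by_cases hac : T.peck a c
    · exact hasPath_of_peck hac
    have hca : T.peck c a := peck_of_not_peck hc hac
    have ha'c : T.peck a' c :=
      peck_of_not_peck (hcd ▸ T.inter a' d ha') (hno c hcd hca)
    exact hasPath_cons haa' (hasPath_of_peck ha'c)
  · by_cases hcd' : T.peck c d
    · rcases hin c hcd' with rfl | rfl
      · exact absurd rfl hc
      · exact hasPath_of_peck haa'
    · exact hasPath_cons ha (hasPath_of_peck (peck_of_not_peck (Ne.symm hcd) hcd'))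

lemma exists_far_of_inNeighbours_pair (h₁ : T.peck b₁ d) (hpart : T.part b₁ = T.part b₂)
    (hin : ∀ c, T.peck c d → c = b₁ ∨ c = b₂)
    (hno : ∀ e, T.part e = T.part d → T.peck e b₁ → ¬ T.peck e b₂) (hb₁ : ¬ T.isDuke 2 b₁) :
    ∃ e, T.part e = T.part d ∧ T.peck e b₁ ∧ T.peck b₂ e := by
  obtain ⟨e, heb, hde, -⟩ := exists_far_of_not_isDuke_two h₁ hb₁
  have he : T.part e = T.part d := by
    by_contra he
    rcases hin e (peck_of_not_peck he hde) with rfl | rfl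
    · exact ne_of_peck heb rfl
    · exact T.inter e b₁ heb hpart.symm
  refine ⟨e, he, heb, peck_of_not_peck ?_ (hno e he heb)⟩
  rw [he, ← hpart]
  exact T.inter b₁ d h₁

lemma exists_four_isDuke_three_of_inNeighbours_pair_of_part_eq (hd : T.isDuke 2 d)
    (hne : T.nonEclipsed d) (h₁ : T.peck b₁ d) (h₂ : T.peck b₂ d) (h12 : b₁ ≠ b₂)
    (hin : ∀ c, T.peck c d → c = b₁ ∨ c = b₂) (he : T.part e = T.part d) (heb₁ : T.peck e b₁)
    (heb₂ : T.hasPath 3 e b₂) (hb₂e : b₂ ≠ e) :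
    ExistsFourDistinct (T.isDuke 3) := by
  have hDuke : T.isDuke 3 e := isDuke_three_of_part_eq he heb₁ h₁ fun c hc => by
    rcases hin c hc with rfl | rfl
    exacts [hasPath_of_peck heb₁, heb₂]
  exact ⟨d, b₁, b₂, e, (ne_of_peck h₁).symm, (ne_of_peck h₂).symm,
    (ne_of_peck_of_peck heb₁ h₁).symm, h12, (ne_of_peck heb₁).symm, hb₂e,
    hd.mono (by norm_num), isDuke_three_of_peck hd hne h₁, isDuke_three_of_peck hd hne h₂, hDuke⟩

lemma exists_four_isDuke_three_of_inNeighbours_pair (hd : T.isDuke 2 d) (hne : T.nonEclipsed d)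
    (h2 : ∀ v, T.isDuke 2 v → ¬ T.peck v d) (h₁ : T.peck b₁ d) (h₂ : T.peck b₂ d)
    (h12 : b₁ ≠ b₂) (hin : ∀ c, T.peck c d → c = b₁ ∨ c = b₂) :
    ExistsFourDistinct (T.isDuke 3) := by
  have hin' : ∀ c, T.peck c d → c = b₂ ∨ c = b₁ := fun c hc => (hin c hc).symm
  by_cases hboth : ∃ e, T.part e = T.part d ∧ T.peck e b₁ ∧ T.peck e b₂
  · obtain ⟨e, he, heb₁, heb₂⟩ := hboth
    exact exists_four_isDuke_three_of_inNeighbours_pair_of_part_eq hd hne h₁ h₂ h12 hin he heb₁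
      (hasPath_of_peck heb₂) (ne_of_peck heb₂).symm
  push Not at hboth
  by_cases hpart : T.part b₁ = T.part b₂
  · obtain ⟨e₁, he₁, he₁b₁, hb₂e₁⟩ :=
      exists_far_of_inNeighbours_pair h₁ hpart hin hboth fun h => h2 b₁ h h₁
    obtain ⟨e₂, -, he₂b₂, hb₁e₂⟩ := exists_far_of_inNeighbours_pair h₂ hpart.symm hin'
      (fun e he heb₂ heb₁ => hboth e he heb₁ heb₂) fun h => h2 b₂ h h₂
    exact exists_four_isDuke_three_of_inNeighbours_pair_of_part_eq hd hne h₁ h₂ h12 hin he₁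
      he₁b₁ (hasPath_cons he₁b₁ (hasPath_cons hb₁e₂ (hasPath_of_peck he₂b₂))) (ne_of_peck hb₂e₁)
  · exfalso
    rcases T.complete b₁ b₂ hpart with h | h
    · exact h2 b₁ (isDuke_two_of_inNeighbours_pair h₁ h₂ h hin hboth) h₁
    · exact h2 b₂ (isDuke_two_of_inNeighbours_pair h₂ h₁ h hin'
        fun e he heb₂ heb₁ => hboth e he heb₁ heb₂) h₂

lemma isDuke_three_of_peck_unique_inNeighbour (hb : T.peck b d) (hin : ∀ c, T.peck c d → c = b)
    (hbE : ∀ c, T.part c = T.part d → c ≠ e → T.peck b c) (hxb : T.peck x b) (hxe : T.peck x e) :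
    T.isDuke 3 x := by
  intro c _
  by_cases hcd : T.part c = T.part d
  · by_cases hce : c = e
    · exact hce ▸ hasPath_of_peck hxe
    · exact hasPath_cons hxb (hasPath_of_peck (hbE c hcd hce))
  · refine hasPath_three_of_peck_of_peck hxb hb (fun c hc => ?_) hcd
    exact hin c hc ▸ hasPath_of_peck hxb

lemma isDuke_three_of_part_eq_unique_inNeighbour (hin : ∀ c, T.peck c d → c = b)
    (he : T.part e = T.part d) (hbE : ∀ c, T.part c = T.part d → c ≠ e → T.peck b c)
    (heb : T.peck e b) (hxe : T.peck x e) (hpart : T.part x = T.part b)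
    (hfar : ∀ y, T.peck b y → ¬ T.peck y e) (hno : ∀ y, T.peck d y → T.peck y e → ¬ T.peck y b) :
    T.isDuke 3 x := by
  intro c hc
  by_cases hcd : T.part c = T.part d
  · by_cases hce : c = e
    · exact hce ▸ hasPath_of_peck hxe
    · exact hasPath_cons hxe (hasPath_cons heb (hasPath_of_peck (hbE c hcd hce)))
  · have hcb : T.part c ≠ T.part b := hpart ▸ hc
    have hdc : T.peck d c :=
      peck_of_not_peck (Ne.symm hcd) fun hcd' => hcb (congrArg T.part (hin c hcd'))
    have hec : T.peck e c := by
      refine peck_of_not_peck (he ▸ Ne.symm hcd) fun hce => ?_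
      rcases T.complete c b hcb with hcb' | hbc
      exacts [hno c hdc hce hcb', hfar c hbc hce]
    exact hasPath_cons hxe (hasPath_of_peck hec)

lemma exists_four_isDuke_three_of_unique_inNeighbour (hd : T.isDuke 2 d) (hne : T.nonEclipsed d)
    (h2 : ∀ v, T.isDuke 2 v → ¬ T.peck v d) (hb : T.peck b d) (hin : ∀ c, T.peck c d → c = b) :
    ExistsFourDistinct (T.isDuke 3) := by
  obtain ⟨e, heb, hde, hfar⟩ := exists_far_of_not_isDuke_two hb fun h => h2 b h hb
  have he : T.part e = T.part d := by
    by_contra he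
    exact ne_of_peck heb (hin e (peck_of_not_peck he hde))
  have hinDuke (e₀ : V) (he₀ : T.part e₀ = T.part d) (he₀b : T.peck e₀ b) : T.isDuke 3 e₀ :=
    isDuke_three_of_part_eq he₀ he₀b hb fun c hc => hin c hc ▸ hasPath_of_peck he₀b
  have four (y : V) (hy : T.isDuke 3 y) (hdy : d ≠ y) (hby : b ≠ y) (hey : e ≠ y) :
      ExistsFourDistinct (T.isDuke 3) :=
    ⟨d, b, e, y, (ne_of_peck hb).symm, (ne_of_peck_of_peck heb hb).symm, hdy,
      (ne_of_peck heb).symm, hby, hey, hd.mono (by norm_num), isDuke_three_of_peck hd hne hb,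
      hinDuke e he heb, hy⟩
  by_cases hother : ∃ e', T.part e' = T.part d ∧ T.peck e' b ∧ e' ≠ e
  · obtain ⟨e', he', he'b, he'e⟩ := hother
    exact four e' (hinDuke e' he' he'b) (ne_of_peck_of_peck he'b hb).symm (ne_of_peck he'b).symm
      he'e.symm
  push Not at hother
  have hbE (c : V) (hc : T.part c = T.part d) (hce : c ≠ e) : T.peck b c :=
    peck_of_not_peck (hc ▸ T.inter b d hb) fun hcb => hce (hother c hc hcb)
  obtain ⟨x, hdx, hxe⟩ : ∃ x, T.peck d x ∧ T.peck x e :=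
    (hne.exists_peck_peck_or_subset he).resolve_right fun hsub => T.asymm _ _ hb (hsub b heb)
  by_cases hx' : ∃ x', T.peck d x' ∧ T.peck x' e ∧ T.peck x' b
  · obtain ⟨x', hdx', hx'e, hx'b⟩ := hx'
    exact four x' (isDuke_three_of_peck_unique_inNeighbour hb hin hbE hx'b hx'e)
      (ne_of_peck hdx') (ne_of_peck_of_peck hb hdx') (ne_of_peck hx'e).symm
  push Not at hx'
  have hpart : T.part x = T.part b := by
    by_contra hpart
    rcases T.complete x b hpart with hxb | hbx
    exacts [hx' x hdx hxe hxb, hfar x hbx hxe]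
  exact four x (isDuke_three_of_part_eq_unique_inNeighbour hin he hbE heb hxe hpart hfar hx')
    (ne_of_peck hdx) (ne_of_peck_of_peck hb hdx) (ne_of_peck hxe).symm

lemma exists_four_isDuke_three (hd : T.isDuke 2 d) (hne : T.nonEclipsed d)
    (h1 : ¬ T.isDuke 1 d) (h2 : ∀ v, T.isDuke 2 v → ¬ T.peck v d) :
    ExistsFourDistinct (T.isDuke 3) := by
  obtain ⟨b₁, h₁⟩ := exists_peck_of_not_isDuke_one h1
  by_cases h3 : ∃ b₂ b₃, b₁ ≠ b₂ ∧ b₁ ≠ b₃ ∧ b₂ ≠ b₃ ∧ T.peck b₂ d ∧ T.peck b₃ d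
  · obtain ⟨b₂, b₃, h12, h13, h23, h₂, h₃⟩ := h3
    exact ⟨d, b₁, b₂, b₃, (ne_of_peck h₁).symm, (ne_of_peck h₂).symm, (ne_of_peck h₃).symm,
      h12, h13, h23, hd.mono (by norm_num), isDuke_three_of_peck hd hne h₁,
      isDuke_three_of_peck hd hne h₂, isDuke_three_of_peck hd hne h₃⟩
  by_cases hpair : ∃ b₂, b₁ ≠ b₂ ∧ T.peck b₂ d
  · obtain ⟨b₂, h12, h₂⟩ := hpair
    refine exists_four_isDuke_three_of_inNeighbours_pair hd hne h2 h₁ h₂ h12 fun c hc => ?_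
    by_contra! hc'
    exact h3 ⟨b₂, c, h12, hc'.1.symm, hc'.2.symm, h₂, hc⟩
  · push Not at hpair
    refine exists_four_isDuke_three_of_unique_inNeighbour hd hne h2 h₁ fun c hc => ?_
    by_contra! hc'
    exact hpair c (Ne.symm hc') hc

end MTour

theorem stmt10_general {V ι : Type*} (T : MTour V ι) (d : V)
    (hd : T.isDuke 2 d) (hne : T.nonEclipsed d) :
    (∃ v, T.isDuke 1 v) ∨
    (∃ v, T.isDuke 2 v ∧ T.peck v d) ∨
    (∃ v₁ v₂ v₃, v₁ ≠ v₂ ∧ v₁ ≠ v₃ ∧ v₂ ≠ v₃ ∧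
      T.isDuke 2 v₁ ∧ T.isDuke 2 v₂ ∧ T.isDuke 2 v₃) ∨
    (∃ v₁ v₂ v₃ v₄, v₁ ≠ v₂ ∧ v₁ ≠ v₃ ∧ v₁ ≠ v₄ ∧ v₂ ≠ v₃ ∧ v₂ ≠ v₄ ∧ v₃ ≠ v₄ ∧
      T.isDuke 3 v₁ ∧ T.isDuke 3 v₂ ∧ T.isDuke 3 v₃ ∧ T.isDuke 3 v₄) := by
  by_cases h1 : ∃ v, T.isDuke 1 v
  · exact .inl h1
  by_cases h2 : ∃ v, T.isDuke 2 v ∧ T.peck v d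
  · exact .inr (.inl h2)
  push Not at h1 h2
  exact .inr (.inr (.inr (MTour.exists_four_isDuke_three hd hne (h1 d) h2)))

/-- If `d` is a non-eclipsed 2-Duke in a multipartite tournament, then a
1-Duke exists, or some 2-Duke pecks `d`, or there are three distinct 2-Dukes,
or there are four distinct 3-Dukes. -/
theorem stmt10 {V ι : Type*} [Finite V] (T : MTour V ι) (d : V)
    (hd : T.isDuke 2 d) (hne : T.nonEclipsed d) :
    (∃ v, T.isDuke 1 v) ∨
    (∃ v, T.isDuke 2 v ∧ T.peck v d) ∨
    (∃ v₁ v₂ v₃, v₁ ≠ v₂ ∧ v₁ ≠ v₃ ∧ v₂ ≠ v₃ ∧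
      T.isDuke 2 v₁ ∧ T.isDuke 2 v₂ ∧ T.isDuke 2 v₃) ∨
    (∃ v₁ v₂ v₃ v₄, v₁ ≠ v₂ ∧ v₁ ≠ v₃ ∧ v₁ ≠ v₄ ∧ v₂ ≠ v₃ ∧ v₂ ≠ v₄ ∧ v₃ ≠ v₄ ∧
      T.isDuke 3 v₁ ∧ T.isDuke 3 v₂ ∧ T.isDuke 3 v₃ ∧ T.isDuke 3 v₄) :=
  stmt10_general T d hd hne
end

section
/- If a partite set V_i in a multipartite tournament is, for every other partite set, either balanced with it or dominates it, then V_i contains a 3-Duke of the whole multipartite tournament. -/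
/-!
If no partite set dominates `V_i`, every vertex `c` outside `V_i` is beaten by some `v ∈ V_i`.
Take `d ∈ V_i` of maximum out-degree within `V_i`, so no vertex of `V_i` eclipses it.
For `c` not pecked by `d`, choose `v ∈ V_i` pecking `c`: if there were no 2-path `d → x → v`,
then `v` would peck every out-neighbour of `d` and also `c`, i.e. `v` would eclipse `d`.
Hence `d → x → v → c` is a path of length 3.
-/

namespace MTour

variable {V ι : Type*} (T : MTour V ι)

lemma hasPath_of_peck_s17 {m : ℕ} (hm : 1 ≤ m) {d c : V} (h : T.peck d c) : T.hasPath m d c :=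
  ⟨1, hm, fun n => if n = 0 then d else c, rfl, rfl, fun j hj => by
    obtain rfl : j = 0 := by omega
    simpa using h⟩

lemma hasPath_three_of_peck {d x v c : V} (hdx : T.peck d x) (hxv : T.peck x v)
    (hvc : T.peck v c) : T.hasPath 3 d c :=
  ⟨3, le_rfl, fun n => if n = 0 then d else if n = 1 then x else if n = 2 then v else c,
    rfl, rfl, fun j hj => by interval_cases j <;> simpa⟩

lemma not_dominates_of_dominates {i j : ι} (h : T.Dominates i j) : ¬ T.Dominates j i := by
  rintro ⟨w, hw, hwi⟩
  obtain ⟨v, hv, hvj⟩ := h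
  exact T.asymm v w (hvj w hw) (hwi v hv)

lemma exists_peck_of_not_dominates {i : ι} {c : V} (hc : T.part c ≠ i)
    (hnd : ¬ T.Dominates (T.part c) i) : ∃ v, T.part v = i ∧ T.peck v c := by
  by_contra! hnone
  exact hnd ⟨c, rfl, fun w hw =>
    (T.complete c w (hw ▸ hc)).resolve_right (hnone w hw)⟩

lemma outDeg_lt_of_eclipses [Finite V] {e d : V} (h : T.eclipses e d) :
    T.outDeg d < T.outDeg e := by
  obtain ⟨-, hsub, c, hec, hdc⟩ := h
  have hssub : {w | T.peck d w} ⊂ {w | T.peck e w} :=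
    ⟨hsub, fun hsup => hdc (hsup hec)⟩
  calc T.outDeg d = {w | T.peck d w}.ncard := Nat.card_coe_set_eq _
    _ < {w | T.peck e w}.ncard := Set.ncard_lt_ncard hssub
    _ = T.outDeg e := (Nat.card_coe_set_eq _).symm

lemma exists_nonEclipsed [Finite V] {i : ι} (hne : ∃ v, T.part v = i) :
    ∃ d, T.part d = i ∧ T.nonEclipsed d := by
  obtain ⟨d, hd, hmax⟩ :=
    Set.Finite.exists_maximalFor T.outDeg {v | T.part v = i} (Set.toFinite _) hne
  refine ⟨d, hd, fun e he => ?_⟩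
  have hlt := T.outDeg_lt_of_eclipses he
  have hei : T.part e = i := he.1.trans hd
  exact absurd (hmax hei hlt.le) (not_le.mpr hlt)

lemma eclipses_of_forall_not_peck {d v c : V} (hvd : T.part v = T.part d)
    (hno : ∀ x, T.peck d x → ¬ T.peck x v) (hvc : T.peck v c) (hdc : ¬ T.peck d c) :
    T.eclipses v d := by
  refine ⟨hvd, fun w hdw => ?_, c, hvc, hdc⟩
  have hvw : T.part v ≠ T.part w := hvd ▸ T.inter d w hdw
  exact (T.complete v w hvw).resolve_right (hno w hdw)

theorem isDuke_three_of_nonEclipsed {d : V} (hd : T.nonEclipsed d)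
    (hnd : ∀ j, j ≠ T.part d → ¬ T.Dominates j (T.part d)) : T.isDuke 3 d := by
  intro c hc
  by_cases hdc : T.peck d c
  · exact T.hasPath_of_peck_s17 (by norm_num) hdc
  obtain ⟨v, hvd, hvc⟩ := T.exists_peck_of_not_dominates hc (hnd _ hc)
  by_contra hnp
  refine hd v (T.eclipses_of_forall_not_peck hvd (fun x hdx hxv => hnp ?_) hvc hdc)
  exact T.hasPath_three_of_peck hdx hxv hvc

end MTour

/-- If a nonempty partite set `i` either dominates or is balanced with every
other partite set, then `i` contains a 3-Duke. -/
theorem stmt17 {V ι : Type*} [Finite V] (T : MTour V ι) (i : ι)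
    (hne : ∃ v, T.part v = i)
    (h : ∀ j, j ≠ i → T.Dominates i j ∨ (¬ T.Dominates i j ∧ ¬ T.Dominates j i)) :
    ∃ d, T.part d = i ∧ T.isDuke 3 d := by
  have hnd : ∀ j, j ≠ i → ¬ T.Dominates j i := fun j hj =>
    (h j hj).elim T.not_dominates_of_dominates And.right
  obtain ⟨d, rfl, hd⟩ := T.exists_nonEclipsed hne
  exact ⟨d, rfl, T.isDuke_three_of_nonEclipsed hd hnd⟩
end
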